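/- Let 0 ≤ θ < 1, γ > 0 with θ + γ < 1, and T > 0. Then there exists a constant C > 0 (depending only on θ, γ and T) such that for every ρ ≥ 1 and every t ∈ (0,T] one has ∫_0^t e^{-ρ(t-r)} (t-r)^{-θ} r^{-γ} dr ≤ C · ρ^{θ - 1 + γ}. -/
import Mathlib


open MeasureTheory Real

lemma aux_rpow_le_exp {x a : ℝ} (hx : 0 < x) (ha0 : 0 < a) (ha1 : a ≤ 1) :
    x ^ a ≤ Real.exp x := by
  rcases le_or_gt x 1 with h | h
  · calc x ^ a ≤ 1 := Real.rpow_le_one hx.le h ha0.le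
      _ ≤ Real.exp x := by linarith [Real.add_one_le_exp x, hx]
  · calc x ^ a ≤ x ^ (1:ℝ) := Real.rpow_le_rpow_of_exponent_le h.le ha1
      _ = x := Real.rpow_one x
      _ ≤ Real.exp x := by linarith [Real.add_one_le_exp x]

lemma aux_beta (γ t : ℝ) (hγ : 0 < γ) (hγ1 : γ < 1) (ht : 0 < t) :
    IntegrableOn (fun r => (t - r) ^ (γ - 1) * r ^ (-γ)) (Set.Ioo 0 t) ∧
    ∫ r in Set.Ioo 0 t, (t - r) ^ (γ - 1) * r ^ (-γ) ≤ 1 / (1 - γ) + 1 / γ := by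
  have ht2 : (0:ℝ) < t / 2 := by linarith
  have hmeas : Measurable fun r : ℝ => (t - r) ^ (γ - 1) * r ^ (-γ) := by fun_prop
  -- piece 1 : Ioc 0 (t/2)
  have hg1 : IntegrableOn (fun r : ℝ => (t / 2) ^ (γ - 1) * r ^ (-γ)) (Set.Ioc 0 (t/2)) := by
    have := (intervalIntegral.intervalIntegrable_rpow' (a := 0) (b := t/2) (r := -γ)
      (by linarith)).const_mul ((t / 2) ^ (γ - 1))
    rwa [intervalIntegrable_iff_integrableOn_Ioc_of_le (by linarith)] at this
  have hb1 : ∀ r ∈ Set.Ioc 0 (t/2),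
      (t - r) ^ (γ - 1) * r ^ (-γ) ≤ (t / 2) ^ (γ - 1) * r ^ (-γ) := by
    intro r hr
    have : (t - r) ^ (γ - 1) ≤ (t / 2) ^ (γ - 1) :=
      Real.rpow_le_rpow_of_nonpos ht2 (by linarith [hr.2]) (by linarith)
    exact mul_le_mul_of_nonneg_right this (Real.rpow_nonneg hr.1.le _)
  have hpos1 : ∀ r ∈ Set.Ioc 0 (t/2), 0 ≤ (t - r) ^ (γ - 1) * r ^ (-γ) := fun r hr =>
    mul_nonneg (Real.rpow_nonneg (by linarith [hr.2]) _) (Real.rpow_nonneg hr.1.le _)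
  have hint1 : IntegrableOn (fun r => (t - r) ^ (γ - 1) * r ^ (-γ)) (Set.Ioc 0 (t/2)) := by
    refine Integrable.mono' hg1 hmeas.aestronglyMeasurable ?_
    filter_upwards [ae_restrict_mem measurableSet_Ioc] with r hr
    rw [Real.norm_eq_abs, abs_of_nonneg (hpos1 r hr)]
    exact hb1 r hr
  have hval1 : ∫ r in Set.Ioc 0 (t/2), (t / 2) ^ (γ - 1) * r ^ (-γ) = 1 / (1 - γ) := by
    rw [MeasureTheory.integral_const_mul]
    have h1 : ∫ r in Set.Ioc 0 (t/2), r ^ (-γ) = ∫ r in (0:ℝ)..(t/2), r ^ (-γ) := by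
      rw [intervalIntegral.intervalIntegral_eq_integral_uIoc, if_pos (by linarith),
        Set.uIoc_of_le (by linarith : (0:ℝ) ≤ t/2), one_smul]
    rw [h1, integral_rpow (Or.inl (by linarith)),
      Real.zero_rpow (by intro h; nlinarith : -γ + 1 ≠ 0), sub_zero, ← mul_div_assoc,
      ← Real.rpow_add ht2, show (γ - 1) + (-γ + 1) = 0 by ring, Real.rpow_zero]
    ring
  have hle1 : ∫ r in Set.Ioc 0 (t/2), (t - r) ^ (γ - 1) * r ^ (-γ) ≤ 1 / (1 - γ) := by
    rw [← hval1]
    exact setIntegral_mono_on hint1 hg1 measurableSet_Ioc hb1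
  -- piece 2 : Ioo (t/2) t
  have hg2 : IntegrableOn (fun r : ℝ => (t / 2) ^ (-γ) * (t - r) ^ (γ - 1))
      (Set.Ioc (t/2) t) := by
    have h0 : IntervalIntegrable (fun x : ℝ => x ^ (γ - 1)) volume 0 (t/2) :=
      intervalIntegral.intervalIntegrable_rpow' (by linarith)
    have h2 := ((h0.comp_sub_left t).const_mul ((t / 2) ^ (-γ))).symm
    rw [show t - t/2 = t/2 by ring, sub_zero] at h2
    rwa [intervalIntegrable_iff_integrableOn_Ioc_of_le (by linarith)] at h2
  have hb2 : ∀ r ∈ Set.Ioc (t/2) t,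
      (t - r) ^ (γ - 1) * r ^ (-γ) ≤ (t / 2) ^ (-γ) * (t - r) ^ (γ - 1) := by
    intro r hr
    have : r ^ (-γ) ≤ (t / 2) ^ (-γ) :=
      Real.rpow_le_rpow_of_nonpos ht2 hr.1.le (by linarith)
    calc (t - r) ^ (γ - 1) * r ^ (-γ) ≤ (t - r) ^ (γ - 1) * (t / 2) ^ (-γ) :=
          mul_le_mul_of_nonneg_left this (Real.rpow_nonneg (by linarith [hr.2]) _)
      _ = (t / 2) ^ (-γ) * (t - r) ^ (γ - 1) := mul_comm _ _
  have hpos2 : ∀ r ∈ Set.Ioc (t/2) t, 0 ≤ (t - r) ^ (γ - 1) * r ^ (-γ) := fun r hr =>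
    mul_nonneg (Real.rpow_nonneg (by linarith [hr.2]) _)
      (Real.rpow_nonneg (by linarith [hr.1]) _)
  have hint2 : IntegrableOn (fun r => (t - r) ^ (γ - 1) * r ^ (-γ)) (Set.Ioc (t/2) t) := by
    refine Integrable.mono' hg2 hmeas.aestronglyMeasurable ?_
    filter_upwards [ae_restrict_mem measurableSet_Ioc] with r hr
    rw [Real.norm_eq_abs, abs_of_nonneg (hpos2 r hr)]
    exact hb2 r hr
  have hval2 : ∫ r in Set.Ioc (t/2) t, (t / 2) ^ (-γ) * (t - r) ^ (γ - 1) = 1 / γ := by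
    rw [MeasureTheory.integral_const_mul]
    have h1 : ∫ r in Set.Ioc (t/2) t, (t - r) ^ (γ - 1)
        = ∫ r in (t/2)..t, (t - r) ^ (γ - 1) := by
      rw [intervalIntegral.intervalIntegral_eq_integral_uIoc, if_pos (by linarith),
        Set.uIoc_of_le (by linarith : t/2 ≤ t), one_smul]
    rw [h1, intervalIntegral.integral_comp_sub_left (fun x : ℝ => x ^ (γ - 1)) t,
      show t - t = 0 by ring, show t - t/2 = t/2 by ring,
      integral_rpow (Or.inl (by linarith)),
      Real.zero_rpow (by intro h; nlinarith : γ - 1 + 1 ≠ 0), sub_zero, ← mul_div_assoc,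
      ← Real.rpow_add ht2, show (-γ) + (γ - 1 + 1) = 0 by ring, Real.rpow_zero]
    ring_nf
  have hle2 : ∫ r in Set.Ioc (t/2) t, (t - r) ^ (γ - 1) * r ^ (-γ) ≤ 1 / γ := by
    rw [← hval2]
    exact setIntegral_mono_on hint2 hg2 measurableSet_Ioc hb2
  -- combine
  have hunion : Set.Ioc 0 (t/2) ∪ Set.Ioo (t/2) t = Set.Ioo 0 t :=
    Set.Ioc_union_Ioo_eq_Ioo (by linarith) (by linarith)
  have hint2' : IntegrableOn (fun r => (t - r) ^ (γ - 1) * r ^ (-γ)) (Set.Ioo (t/2) t) :=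
    hint2.mono_set Set.Ioo_subset_Ioc_self
  have hint : IntegrableOn (fun r => (t - r) ^ (γ - 1) * r ^ (-γ)) (Set.Ioo 0 t) := by
    rw [← hunion]
    exact hint1.union hint2'
  refine ⟨hint, ?_⟩
  rw [← hunion, MeasureTheory.setIntegral_union ?_ measurableSet_Ioo hint1 hint2']
  · have h2 : ∫ r in Set.Ioo (t/2) t, (t - r) ^ (γ - 1) * r ^ (-γ) ≤ 1 / γ := by
      rw [← MeasureTheory.integral_Ioc_eq_integral_Ioo]
      exact hle2
    linarith
  · exact Set.disjoint_left.2 fun x hx hx' => absurd hx'.1 (not_lt.2 hx.2)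

/-- Second estimate of Lemma 3.3: for `0 ≤ θ < 1`, `γ > 0` with `θ + γ < 1` and `T > 0`,
there exists `C > 0` such that for every `ρ ≥ 1` and every `t ∈ (0,T]`,
`∫_0^t e^{-ρ(t-r)} (t-r)^{-θ} r^{-γ} dr ≤ C ρ^{θ-1+γ}`. -/
theorem integral_exp_convolution_bound (θ γ T : ℝ) (hθ0 : 0 ≤ θ) (hθ1 : θ < 1)
    (hγ : 0 < γ) (hθγ : θ + γ < 1) (hT : 0 < T) :
    ∃ C > 0, ∀ ρ : ℝ, 1 ≤ ρ → ∀ t ∈ Set.Ioc (0 : ℝ) T,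
      ∫ r in Set.Ioo 0 t, Real.exp (-ρ * (t - r)) * (t - r) ^ (-θ) * r ^ (-γ)
        ≤ C * ρ ^ (θ - 1 + γ) := by
  have hγ1 : γ < 1 := by linarith
  have h1γ : 0 < 1 - γ := by linarith
  refine ⟨1 / (1 - γ) + 1 / γ, by positivity, ?_⟩
  intro ρ hρ t ht
  have ht0 : 0 < t := ht.1
  have hρ0 : (0:ℝ) ≤ ρ := by linarith
  obtain ⟨hint, hval⟩ := aux_beta γ t hγ hγ1 ht0
  set e : ℝ := θ - 1 + γ with he
  have hgint : IntegrableOn (fun r => ρ ^ e * ((t - r) ^ (γ - 1) * r ^ (-γ)))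
      (Set.Ioo 0 t) := hint.const_mul _
  have hb : ∀ r ∈ Set.Ioo 0 t,
      Real.exp (-ρ * (t - r)) * (t - r) ^ (-θ) * r ^ (-γ)
        ≤ ρ ^ e * ((t - r) ^ (γ - 1) * r ^ (-γ)) := by
    intro r hr
    have hu : 0 < t - r := by linarith [hr.2]
    have hx : 0 < ρ * (t - r) := by positivity
    have h1 : (ρ * (t - r)) ^ (1 - θ - γ) ≤ Real.exp (ρ * (t - r)) :=
      aux_rpow_le_exp hx (by linarith) (by linarith)
    have h2 : Real.exp (-ρ * (t - r)) ≤ (ρ * (t - r)) ^ e := by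
      rw [neg_mul, Real.exp_neg, show e = -(1 - θ - γ) by rw [he]; ring,
        Real.rpow_neg hx.le]
      exact inv_anti₀ (Real.rpow_pos_of_pos hx _) h1
    have e1 : (t - r) ^ e * (t - r) ^ (-θ) = (t - r) ^ (γ - 1) := by
      rw [← Real.rpow_add hu, show e + (-θ) = γ - 1 by rw [he]; ring]
    calc Real.exp (-ρ * (t - r)) * (t - r) ^ (-θ) * r ^ (-γ)
        ≤ (ρ * (t - r)) ^ e * (t - r) ^ (-θ) * r ^ (-γ) := by
          have := mul_le_mul_of_nonneg_right h2 (Real.rpow_nonneg hu.le (-θ))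
          exact mul_le_mul_of_nonneg_right this (Real.rpow_nonneg hr.1.le (-γ))
      _ = ρ ^ e * ((t - r) ^ e * (t - r) ^ (-θ)) * r ^ (-γ) := by
          rw [Real.mul_rpow hρ0 hu.le]; ring
      _ = ρ ^ e * ((t - r) ^ (γ - 1) * r ^ (-γ)) := by rw [e1]; ring
  have hfpos : ∀ r ∈ Set.Ioo 0 t,
      0 ≤ Real.exp (-ρ * (t - r)) * (t - r) ^ (-θ) * r ^ (-γ) := by
    intro r hr
    have hu : 0 < t - r := by linarith [hr.2]
    have hr0 : 0 < r := hr.1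
    positivity
  have hfmeas : Measurable fun r : ℝ =>
      Real.exp (-ρ * (t - r)) * (t - r) ^ (-θ) * r ^ (-γ) := by fun_prop
  have hfint : IntegrableOn (fun r =>
      Real.exp (-ρ * (t - r)) * (t - r) ^ (-θ) * r ^ (-γ)) (Set.Ioo 0 t) := by
    refine Integrable.mono' hgint hfmeas.aestronglyMeasurable ?_
    filter_upwards [ae_restrict_mem measurableSet_Ioo] with r hr
    rw [Real.norm_eq_abs, abs_of_nonneg (hfpos r hr)]
    exact hb r hr
  calc ∫ r in Set.Ioo 0 t, Real.exp (-ρ * (t - r)) * (t - r) ^ (-θ) * r ^ (-γ)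
      ≤ ∫ r in Set.Ioo 0 t, ρ ^ e * ((t - r) ^ (γ - 1) * r ^ (-γ)) :=
        setIntegral_mono_on hfint hgint measurableSet_Ioo hb
    _ = ρ ^ e * ∫ r in Set.Ioo 0 t, (t - r) ^ (γ - 1) * r ^ (-γ) :=
        MeasureTheory.integral_const_mul _ _
    _ ≤ ρ ^ e * (1 / (1 - γ) + 1 / γ) :=
        mul_le_mul_of_nonneg_left hval (Real.rpow_nonneg hρ0 _)
    _ = (1 / (1 - γ) + 1 / γ) * ρ ^ e := mul_comm _ _
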